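/- arXiv:2202.11464 — 4 statements merged into one kernel-verified Lean document; each statement's English description precedes it below -/
import Mathlib

section
/- Let l ≥ 1 and k ≥ l be natural numbers and μ > 0. Let Y₁,…,Y_l be i.i.d. exponential random variables with rate μ, let Z₁,…,Z_{k−l} be i.i.d. exponential random variables with rate lμ, and let all of these be mutually independent. Define the tiny-tasks split-merge job service time Δ = max_{i∈[1,l]} Y_i + Σ_{j=1}^{k−l} Z_j. Then for every θ ∈ (0, μ), the moment generating function of Δ satisfies E[e^{θΔ}] = (lμ/(lμ−θ))^{k−l} · ∏_{i=1}^{l} iμ/(iμ−θ). -/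
open MeasureTheory ProbabilityTheory Real Finset

open Set Filter Topology

/-!
The maximum `M` of the `Y i` and the sum `S` of the `Z j` are independent, so
`mgf Δ = mgf M * mgf S`, and `mgf S` is the `(k - l)`-th power of the `Exp(lμ)` mgf `lμ / (lμ - θ)`.
By independence the CDF of `M` is `(1 - exp (-μt)) ^ l`, so `M` has density
`lμ exp (-μx) (1 - exp (-μx)) ^ (l - 1)` on `[0, ∞)`. Integration by parts,
`a ∫ exp (-ax) (1 - exp (-bx)) ^ (n + 1) = (n + 1) b ∫ exp (-(a + b)x) (1 - exp (-bx)) ^ n`,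
evaluates the resulting integral for `a = μ - θ`, `b = μ` as `∏_{i=1}^{l} iμ / (iμ - θ)`.
-/

lemma hasDerivAt_one_sub_exp_neg_mul_pow_succ (b : ℝ) (n : ℕ) (x : ℝ) :
    HasDerivAt (fun x => (1 - exp (-(b * x))) ^ (n + 1))
      ((n + 1) * b * (exp (-(b * x)) * (1 - exp (-(b * x))) ^ n)) x := by
  have h : HasDerivAt (fun x => 1 - exp (-(b * x))) (b * exp (-(b * x))) x := by
    simpa [mul_comm] using ((hasDerivAt_id x).const_mul (-b)).exp.const_sub 1
  refine (h.pow (n + 1)).congr_deriv ?_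
  push_cast
  ring

lemma integrableOn_exp_neg_mul_mul_one_sub_exp_neg_mul_pow {a b : ℝ} (ha : 0 < a) (hb : 0 ≤ b)
    (n : ℕ) : IntegrableOn (fun x => exp (-(a * x)) * (1 - exp (-(b * x))) ^ n) (Ioi 0) := by
  refine (exp_neg_integrableOn_Ioi 0 ha).mono' (by fun_prop) ?_
  filter_upwards [ae_restrict_mem measurableSet_Ioi] with x (hx : 0 < x)
  have h0 : 0 ≤ 1 - exp (-(b * x)) := sub_nonneg.2 (exp_le_one_iff.2 (by nlinarith))
  have h1 : 1 - exp (-(b * x)) ≤ 1 := by linarith [exp_pos (-(b * x))]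
  rw [norm_mul, norm_of_nonneg (exp_pos _).le, norm_of_nonneg (pow_nonneg h0 n), neg_mul]
  exact mul_le_of_le_one_right (exp_pos _).le (pow_le_one₀ h0 h1)

lemma tendsto_exp_neg_mul_mul_one_sub_exp_neg_mul_pow {a b : ℝ} (ha : 0 < a) (hb : 0 < b)
    (n : ℕ) : Tendsto (fun x => exp (-(a * x)) * (1 - exp (-(b * x))) ^ n) atTop (𝓝 0) := by
  have hexp {c : ℝ} (hc : 0 < c) : Tendsto (fun x => exp (-(c * x))) atTop (𝓝 0) :=
    tendsto_exp_atBot.comp (tendsto_neg_atTop_atBot.comp (tendsto_id.const_mul_atTop hc))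
  simpa using (hexp ha).mul ((tendsto_const_nhds.sub (hexp hb)).pow n)

lemma mul_integral_exp_neg_mul_mul_one_sub_exp_neg_mul_pow_succ {a b : ℝ} (ha : 0 < a)
    (hb : 0 < b) (n : ℕ) :
    a * ∫ x in Ioi 0, exp (-(a * x)) * (1 - exp (-(b * x))) ^ (n + 1) =
      (n + 1) * b * ∫ x in Ioi 0, exp (-((a + b) * x)) * (1 - exp (-(b * x))) ^ n := by
  have hderiv (x : ℝ) : HasDerivAt (fun x => exp (-(a * x)) * (1 - exp (-(b * x))) ^ (n + 1))
      ((n + 1) * b * (exp (-((a + b) * x)) * (1 - exp (-(b * x))) ^ n) -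
        a * (exp (-(a * x)) * (1 - exp (-(b * x))) ^ (n + 1))) x := by
    have he : HasDerivAt (fun x => exp (-(a * x))) (-a * exp (-(a * x))) x := by
      simpa [mul_comm] using ((hasDerivAt_id x).const_mul (-a)).exp
    refine (he.mul (hasDerivAt_one_sub_exp_neg_mul_pow_succ b n x)).congr_deriv ?_
    rw [show -((a + b) * x) = -(a * x) + -(b * x) by ring, exp_add]
    ring
  have hint₁ := (integrableOn_exp_neg_mul_mul_one_sub_exp_neg_mul_pow (a := a + b) (by linarith)
    hb.le n).const_mul ((n + 1) * b)
  have hint₂ := (integrableOn_exp_neg_mul_mul_one_sub_exp_neg_mul_pow ha hb.le (n + 1)).const_mul a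
  have hftc := integral_Ioi_of_hasDerivAt_of_tendsto' (fun x _ => hderiv x) (hint₁.sub hint₂)
    (tendsto_exp_neg_mul_mul_one_sub_exp_neg_mul_pow ha hb (n + 1))
  rw [integral_sub hint₁ hint₂, integral_const_mul, integral_const_mul] at hftc
  simp only [mul_zero, neg_zero, exp_zero, sub_self, zero_pow (Nat.succ_ne_zero n)] at hftc
  linarith

theorem integral_exp_neg_mul_mul_one_sub_exp_neg_mul_pow {a b : ℝ} (ha : 0 < a) (hb : 0 < b)
    (n : ℕ) :
    ∫ x in Ioi 0, exp (-(a * x)) * (1 - exp (-(b * x))) ^ n =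
      (∏ i ∈ range n, ((i + 1) * b)) / ∏ i ∈ range (n + 1), (a + i * b) := by
  induction n generalizing a with
  | zero =>
    simpa [← neg_mul] using integral_exp_mul_Ioi (neg_lt_zero.2 ha) 0
  | succ n ih =>
    have hab : 0 < a + b := by linarith
    have key := mul_integral_exp_neg_mul_mul_one_sub_exp_neg_mul_pow_succ ha hb n
    rw [ih hab] at key
    have hden :
        ∏ i ∈ range (n + 2), (a + i * b) = (∏ i ∈ range (n + 1), (a + b + i * b)) * a := by
      rw [prod_range_succ', Nat.cast_zero, zero_mul, add_zero]
      congr 1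
      refine prod_congr rfl fun i _ => ?_
      push_cast
      ring
    have hpos : 0 < ∏ i ∈ range (n + 1), (a + b + i * b) := prod_pos fun i _ => by positivity
    rw [hden, prod_range_succ, eq_div_iff (by positivity)]
    calc _ = (a * ∫ x in Ioi 0, exp (-(a * x)) * (1 - exp (-(b * x))) ^ (n + 1)) *
          ∏ i ∈ range (n + 1), (a + b + i * b) := by ring
      _ = _ := by rw [key]; field_simp

namespace ProbabilityTheory

/-- Density of the maximum of `n + 1` i.i.d. `Exp(r)` variables: the derivative of its CDF
`(1 - exp (-(r x))) ^ (n + 1)` on `[0, ∞)`. -/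
noncomputable def maxExpPDFReal (r : ℝ) (n : ℕ) : ℝ → ℝ :=
  (Set.Ici 0).indicator fun x => (n + 1) * r * (exp (-(r * x)) * (1 - exp (-(r * x))) ^ n)

noncomputable def maxExpMeasure (r : ℝ) (n : ℕ) : Measure ℝ :=
  volume.withDensity fun x => ENNReal.ofReal (maxExpPDFReal r n x)

lemma expMeasure_eq_maxExpMeasure_zero (r : ℝ) : expMeasure r = maxExpMeasure r 0 := by
  refine congrArg volume.withDensity (funext fun x => ?_)
  show exponentialPDF r x = _
  rw [exponentialPDF_eq, maxExpPDFReal, indicator_apply]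
  simp

lemma measurable_maxExpPDFReal (r : ℝ) (n : ℕ) : Measurable (maxExpPDFReal r n) :=
  Measurable.indicator (by fun_prop) measurableSet_Ici

lemma maxExpPDFReal_nonneg {r : ℝ} (hr : 0 ≤ r) (n : ℕ) (x : ℝ) : 0 ≤ maxExpPDFReal r n x := by
  refine indicator_nonneg (fun x (hx : x ∈ Set.Ici 0) => ?_) x
  rw [Set.mem_Ici] at hx
  have : exp (-(r * x)) ≤ 1 := exp_le_one_iff.2 (by nlinarith)
  have : 0 ≤ 1 - exp (-(r * x)) := by linarith
  positivity

lemma integrable_maxExpPDFReal {r : ℝ} (hr : 0 < r) (n : ℕ) : Integrable (maxExpPDFReal r n) :=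
  (integrable_indicator_iff measurableSet_Ici).2 <| (integrableOn_Ici_iff_integrableOn_Ioi).2 <|
    (integrableOn_exp_neg_mul_mul_one_sub_exp_neg_mul_pow hr hr.le n).const_mul _

lemma integral_maxExpMeasure {r : ℝ} (hr : 0 ≤ r) (n : ℕ) (g : ℝ → ℝ) :
    ∫ x, g x ∂maxExpMeasure r n =
      ∫ x in Ioi 0, (n + 1) * r * (exp (-(r * x)) * (1 - exp (-(r * x))) ^ n) * g x := by
  rw [maxExpMeasure, integral_withDensity_eq_integral_toReal_smul
    (measurable_maxExpPDFReal r n).ennreal_ofReal (ae_of_all _ fun _ => ENNReal.ofReal_lt_top)]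
  simp_rw [ENNReal.toReal_ofReal (maxExpPDFReal_nonneg hr n _), smul_eq_mul, maxExpPDFReal,
    ← indicator_mul_left]
  rw [integral_indicator measurableSet_Ici, integral_Ici_eq_integral_Ioi]

lemma mgf_id_maxExpMeasure {r θ : ℝ} (hr : 0 < r) (hθ : θ < r) (n : ℕ) :
    mgf id (maxExpMeasure r n) θ = ∏ i ∈ Icc 1 (n + 1), (i * r / (i * r - θ)) := by
  have hint : ∫ x in Ioi 0, exp (-((r - θ) * x)) * (1 - exp (-(r * x))) ^ n =
      (∏ i ∈ range n, ((i + 1) * r)) / ∏ i ∈ range (n + 1), ((i + 1) * r - θ) := by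
    rw [integral_exp_neg_mul_mul_one_sub_exp_neg_mul_pow (by linarith) hr]
    congr 1
    exact prod_congr rfl fun i _ => by ring
  have hintegrand (x : ℝ) :
      (n + 1) * r * (exp (-(r * x)) * (1 - exp (-(r * x))) ^ n) * exp (θ * id x) =
        (n + 1) * r * (exp (-((r - θ) * x)) * (1 - exp (-(r * x))) ^ n) := by
    rw [show -((r - θ) * x) = -(r * x) + θ * id x by simp; ring, exp_add]
    ring
  simp_rw [mgf, integral_maxExpMeasure hr.le, hintegrand]
  have hIcc : ∏ i ∈ Icc 1 (n + 1), (i * r / (i * r - θ)) =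
      ∏ i ∈ range (n + 1), (((i + 1 : ℕ) : ℝ) * r / ((i + 1 : ℕ) * r - θ)) := by
    rw [range_eq_Ico, prod_Ico_add' (fun i : ℕ => (i * r / (i * r - θ)))]
    rfl
  rw [integral_const_mul, hint, hIcc, prod_div_distrib]
  push_cast
  rw [prod_range_succ (fun i : ℕ => ((i : ℝ) + 1) * r) n]
  ring

lemma maxExpMeasure_Iic {r : ℝ} (hr : 0 < r) (n : ℕ) (t : ℝ) :
    maxExpMeasure r n (Iic t) = expMeasure r (Iic t) ^ (n + 1) := by
  have := isProbabilityMeasure_expMeasure hr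
  have hint := (integrable_maxExpPDFReal hr n).integrableOn (s := Iic t)
  rw [maxExpMeasure, withDensity_apply _ measurableSet_Iic,
    ← ofReal_integral_eq_lintegral_ofReal hint (ae_of_all _ (maxExpPDFReal_nonneg hr.le n)),
    ← ofReal_cdf, cdf_expMeasure_eq hr, maxExpPDFReal, setIntegral_indicator measurableSet_Ici,
    Set.Iic_inter_Ici]
  rcases le_or_gt 0 t with ht | ht
  · have hcdf : 0 ≤ 1 - exp (-(r * t)) := sub_nonneg.2 (exp_le_one_iff.2 (by nlinarith))
    rw [if_pos ht, ← ENNReal.ofReal_pow hcdf, integral_Icc_eq_integral_Ioc,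
      ← intervalIntegral.integral_of_le ht, intervalIntegral.integral_eq_sub_of_hasDerivAt
        (fun x _ => hasDerivAt_one_sub_exp_neg_mul_pow_succ r n x)
        ((by fun_prop : Continuous _).intervalIntegrable 0 t)]
    simp
  · rw [if_neg ht.not_ge, Set.Icc_eq_empty ht.not_ge]
    simp

variable {Ω : Type*} [MeasurableSpace Ω] {P : Measure Ω}

lemma mgf_of_map_eq_expMeasure {X : Ω → ℝ} {r θ : ℝ} (hX : Measurable X)
    (hlaw : P.map X = expMeasure r) (hr : 0 < r) (hθ : θ < r) : mgf X P θ = r / (r - θ) := by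
  rw [← mgf_id_map hX.aemeasurable, hlaw, expMeasure_eq_maxExpMeasure_zero,
    mgf_id_maxExpMeasure hr hθ]
  simp

lemma iIndepFun.measure_iSup_le_eq_prod {ι β : Type*} [Fintype ι] [Nonempty ι]
    [ConditionallyCompleteLinearOrder β] [TopologicalSpace β] [ClosedIicTopology β]
    [MeasurableSpace β] [OpensMeasurableSpace β] {Y : ι → Ω → β} (hindep : iIndepFun Y P)
    (t : β) : P ((fun ω => ⨆ i, Y i ω) ⁻¹' Iic t) = ∏ i, P (Y i ⁻¹' Iic t) := by
  have hpre : (fun ω => ⨆ i, Y i ω) ⁻¹' Iic t = ⋂ i, Y i ⁻¹' Iic t := by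
    ext ω
    simpa using ciSup_le_iff (Set.finite_range _).bddAbove
  rw [hpre, hindep.meas_iInter fun i => ⟨Iic t, measurableSet_Iic, rfl⟩]

section IidExp

variable {ι : Type*} [Fintype ι] [Nonempty ι] {Y : ι → Ω → ℝ} {r : ℝ}

lemma map_iSup_eq_maxExpMeasure {n : ℕ} (hindep : iIndepFun Y P) (hY : ∀ i, Measurable (Y i))
    (hlaw : ∀ i, P.map (Y i) = expMeasure r) (hr : 0 < r) (hn : Fintype.card ι = n + 1) :
    P.map (fun ω => ⨆ i, Y i ω) = maxExpMeasure r n := by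
  have := hindep.isProbabilityMeasure
  have hM : Measurable fun ω => ⨆ i, Y i ω := Measurable.iSup hY
  have := Measure.isProbabilityMeasure_map (μ := P) hM.aemeasurable
  refine Measure.ext_of_Iic _ _ fun t => ?_
  rw [Measure.map_apply hM measurableSet_Iic, hindep.measure_iSup_le_eq_prod, maxExpMeasure_Iic hr,
    ← hn, ← card_univ, ← prod_const]
  exact prod_congr rfl fun i _ => by rw [← Measure.map_apply (hY i) measurableSet_Iic, hlaw i]

lemma mgf_iSup_of_map_eq_expMeasure {θ : ℝ} (hindep : iIndepFun Y P) (hY : ∀ i, Measurable (Y i))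
    (hlaw : ∀ i, P.map (Y i) = expMeasure r) (hr : 0 < r) (hθ : θ < r) :
    mgf (fun ω => ⨆ i, Y i ω) P θ =
      ∏ i ∈ Icc 1 (Fintype.card ι), (i * r / (i * r - θ)) := by
  obtain ⟨n, hn⟩ := Nat.exists_eq_add_one_of_ne_zero (Fintype.card_ne_zero (α := ι))
  rw [← mgf_id_map (Measurable.iSup hY).aemeasurable,
    map_iSup_eq_maxExpMeasure hindep hY hlaw hr hn, mgf_id_maxExpMeasure hr hθ, hn]

end IidExp

lemma iIndepFun.indepFun_sumElim {ι κ β : Type*} [MeasurableSpace β] {X : ι → Ω → β}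
    {Y : κ → Ω → β} (hindep : iIndepFun (Sum.elim X Y) P) (hX : ∀ i, Measurable (X i))
    (hY : ∀ j, Measurable (Y j)) : IndepFun (fun ω i => X i ω) (fun ω j => Y j ω) P := by
  have hle : ∀ k, MeasurableSpace.comap (Sum.elim X Y k) ‹_› ≤ ‹MeasurableSpace Ω› := by
    rintro (i | j)
    exacts [(hX i).comap_le, (hY j).comap_le]
  have h := indep_iSup_of_disjoint hle hindep.iIndep Set.isCompl_range_inl_range_inr.disjoint
  rw [IndepFun_iff_Indep]
  refine indep_of_indep_of_le h ?_ ?_ <;>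
    simp only [MeasurableSpace.pi, MeasurableSpace.comap_iSup, MeasurableSpace.comap_comp,
      Function.comp_def, iSup_le_iff]
  exacts [fun k => le_iSup₂_of_le (Sum.inl k) ⟨k, rfl⟩ le_rfl,
    fun k => le_iSup₂_of_le (Sum.inr k) ⟨k, rfl⟩ le_rfl]

end ProbabilityTheory

theorem tiny_tasks_split_merge_mgf_general
    {Ω : Type*} [MeasurableSpace Ω] (P : Measure Ω)
    (l k : ℕ) (hl : 1 ≤ l) (μ : ℝ) (hμ : 0 < μ)
    (Y : Fin l → Ω → ℝ) (Z : Fin (k - l) → Ω → ℝ)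
    (hYmeas : ∀ i, Measurable (Y i)) (hZmeas : ∀ j, Measurable (Z j))
    (hYlaw : ∀ i, Measure.map (Y i) P = expMeasure μ)
    (hZlaw : ∀ j, Measure.map (Z j) P = expMeasure (l * μ))
    (hindep : iIndepFun (Sum.elim Y Z) P)
    (Δ : Ω → ℝ) (hΔ : ∀ ω, Δ ω = (⨆ i, Y i ω) + ∑ j, Z j ω)
    (θ : ℝ) (hθ : θ ∈ Set.Ioo 0 μ) :
    mgf Δ P θ =
      (l * μ / (l * μ - θ)) ^ (k - l) *
        ∏ i ∈ Finset.Icc 1 l, ((i : ℝ) * μ / ((i : ℝ) * μ - θ)) := by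
  have : Nonempty (Fin l) := ⟨⟨0, hl⟩⟩
  have hθl : θ < l * μ := hθ.2.trans_le (le_mul_of_one_le_left hμ.le (by exact_mod_cast hl))
  have hΔ' : Δ = (fun ω => ⨆ i, Y i ω) + ∑ j, Z j := funext fun ω => by simp [hΔ]
  have hY : iIndepFun Y P := hindep.precomp (g := Sum.inl) Sum.inl_injective
  have hZ : iIndepFun Z P := hindep.precomp (g := Sum.inr) Sum.inr_injective
  have hS : ∑ j, Z j = (fun z => ∑ j, z j) ∘ fun ω j => Z j ω := by
    ext ω
    simp
  have hMS : IndepFun (fun ω => ⨆ i, Y i ω) (∑ j, Z j) P := by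
    rw [hS]
    exact (hindep.indepFun_sumElim hYmeas hZmeas).comp (Measurable.iSup measurable_pi_apply)
      (measurable_sum univ fun j _ => measurable_pi_apply j)
  rw [hΔ', hMS.mgf_add' (Measurable.iSup hYmeas).aestronglyMeasurable (by fun_prop),
    mgf_iSup_of_map_eq_expMeasure hY hYmeas hYlaw hμ hθ.2, hZ.mgf_sum hZmeas, Fintype.card_fin]
  simp_rw [mgf_of_map_eq_expMeasure (hZmeas _) (hZlaw _) (hθ.1.trans hθl) hθl]
  rw [prod_const, card_univ, Fintype.card_fin, mul_comm]

/-- MGF of the tiny-tasks split-merge job service time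
`Δ = max_{i∈[1,l]} Y_i + Σ_{j=1}^{k−l} Z_j`, where the `Y_i` are i.i.d. `Exp(μ)`,
the `Z_j` are i.i.d. `Exp(lμ)`, and all are mutually independent:
for `θ ∈ (0, μ)`, `E[e^{θΔ}] = (lμ/(lμ−θ))^{k−l} · ∏_{i=1}^{l} iμ/(iμ−θ)`. -/
theorem tiny_tasks_split_merge_mgf
    {Ω : Type*} [MeasurableSpace Ω] (P : Measure Ω) [IsProbabilityMeasure P]
    (l k : ℕ) (hl : 1 ≤ l) (hlk : l ≤ k) (μ : ℝ) (hμ : 0 < μ)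
    (Y : Fin l → Ω → ℝ) (Z : Fin (k - l) → Ω → ℝ)
    (hYmeas : ∀ i, Measurable (Y i)) (hZmeas : ∀ j, Measurable (Z j))
    (hYlaw : ∀ i, Measure.map (Y i) P = expMeasure μ)
    (hZlaw : ∀ j, Measure.map (Z j) P = expMeasure (l * μ))
    (hindep : iIndepFun (Sum.elim Y Z) P)
    (Δ : Ω → ℝ) (hΔ : ∀ ω, Δ ω = (⨆ i, Y i ω) + ∑ j, Z j ω)
    (θ : ℝ) (hθ : θ ∈ Set.Ioo 0 μ) :
    mgf Δ P θ =
      (l * μ / (l * μ - θ)) ^ (k - l) *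
        ∏ i ∈ Finset.Icc 1 l, ((i : ℝ) * μ / ((i : ℝ) * μ - θ)) :=
  tiny_tasks_split_merge_mgf_general P l k hl μ hμ Y Z hYmeas hZmeas hYlaw hZlaw hindep Δ hΔ θ hθ
end

section
/- Let l ≥ 1 and k ≥ l be natural numbers and μ > 0. Let Y₁,…,Y_l be i.i.d. exponential random variables with rate μ, let Z₁,…,Z_{k−l} be i.i.d. exponential random variables with rate lμ, all mutually independent, and let Δ = max_{i∈[1,l]} Y_i + Σ_{j=1}^{k−l} Z_j. Then the expected job service time is E[Δ] = (1/μ)·(k/l + Σ_{i=2}^{l} 1/i). -/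
/-! The maximum of `l` i.i.d. `Exp(μ)` variables exceeds `t > 0` with probability
`1 - (1 - e^{-μt})^l = ∑_{j<l} e^{-μt} (1 - e^{-μt})^j`, and the `j`-th term integrates to
`1 / ((j + 1) μ)`, so by the layer-cake formula the maximum has mean `H_l / μ`, where `H_l` is the
harmonic number. A single `Exp(lμ)` gap is the case of one variable, with mean `1 / (lμ)`, and
linearity gives `E[Δ] = H_l / μ + (k - l) / (lμ)`. -/

open MeasureTheory ProbabilityTheory Real Finset Set Filter Topology

section ExponentialIntegrals

variable {b : ℝ}

lemma integrableOn_exp_mul_one_sub_exp_pow (hb : 0 < b) (n : ℕ) :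
    IntegrableOn (fun t ↦ exp (-(b * t)) * (1 - exp (-(b * t))) ^ n) (Ioi 0) := by
  refine (exp_neg_integrableOn_Ioi 0 hb).mono' (by fun_prop) ?_
  filter_upwards [ae_restrict_mem measurableSet_Ioi] with t ht
  have hexp_le : exp (-(b * t)) ≤ 1 := exp_le_one_iff.mpr (by nlinarith [mem_Ioi.mp ht])
  have hbase : 0 ≤ 1 - exp (-(b * t)) := sub_nonneg.mpr hexp_le
  rw [norm_mul, norm_pow, Real.norm_of_nonneg (exp_pos _).le, Real.norm_of_nonneg hbase, neg_mul]
  exact mul_le_of_le_one_right (exp_pos _).le (pow_le_one₀ hbase (sub_le_self _ (exp_pos _).le))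

lemma integral_exp_mul_one_sub_exp_pow (hb : 0 < b) (n : ℕ) :
    ∫ t in Ioi 0, exp (-(b * t)) * (1 - exp (-(b * t))) ^ n = 1 / ((n + 1) * b) := by
  set F : ℝ → ℝ := fun t ↦ (1 - exp (-(b * t))) ^ (n + 1) / ((n + 1) * b)
  have hderiv : ∀ x ∈ Ioi (0 : ℝ),
      HasDerivAt F (exp (-(b * x)) * (1 - exp (-(b * x))) ^ n) x := by
    intro x _
    have hbase : HasDerivAt (fun t ↦ 1 - exp (-(b * t))) (b * exp (-(b * x))) x := by
      simpa [sub_eq_add_neg] using (hasDerivAt_neg_exp_mul_exp (r := b)).const_add 1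
    refine ((hbase.pow (n + 1)).div_const ((n + 1) * b)).congr_deriv ?_
    push_cast
    field_simp
  have hlim : Tendsto F atTop (𝓝 (1 / ((n + 1) * b))) := by
    have hexp : Tendsto (fun t ↦ exp (-(b * t))) atTop (𝓝 0) :=
      tendsto_exp_atBot.comp (tendsto_neg_atTop_atBot.comp (tendsto_id.const_mul_atTop hb))
    simpa [F] using
      (((tendsto_const_nhds (x := (1 : ℝ))).sub hexp).pow (n + 1)).div_const ((n + 1) * b)
  rw [integral_Ioi_of_hasDerivAt_of_tendsto (by fun_prop) hderiv
    (integrableOn_exp_mul_one_sub_exp_pow hb n) hlim]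
  simp [F]

lemma one_sub_one_sub_pow_eq_sum (x : ℝ) (n : ℕ) :
    1 - (1 - x) ^ n = ∑ j ∈ range n, x * (1 - x) ^ j := by
  rw [← mul_sum]
  linear_combination geom_sum_mul (1 - x) n

lemma integrableOn_one_sub_one_sub_exp_pow (hb : 0 < b) (n : ℕ) :
    IntegrableOn (fun t ↦ 1 - (1 - exp (-(b * t))) ^ n) (Ioi 0) := by
  simp only [one_sub_one_sub_pow_eq_sum]
  exact integrable_finsetSum _ fun j _ ↦ integrableOn_exp_mul_one_sub_exp_pow hb j

lemma integral_one_sub_one_sub_exp_pow (hb : 0 < b) (n : ℕ) :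
    ∫ t in Ioi 0, (1 - (1 - exp (-(b * t))) ^ n) = harmonic n / b := by
  simp only [one_sub_one_sub_pow_eq_sum]
  rw [integral_finsetSum _ fun j _ ↦ integrableOn_exp_mul_one_sub_exp_pow hb j]
  simp only [integral_exp_mul_one_sub_exp_pow hb, harmonic, Rat.cast_sum, sum_div]
  refine sum_congr rfl fun j _ ↦ ?_
  push_cast
  field_simp

end ExponentialIntegrals

section Survival

variable {Ω : Type*} [MeasurableSpace Ω] {P : Measure Ω}

lemma integrable_and_integral_eq_of_meas_lt_eq_ofReal {X : Ω → ℝ} (hX : AEMeasurable X P)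
    (hX_nonneg : 0 ≤ᵐ[P] X) {g : ℝ → ℝ} (hg : IntegrableOn g (Ioi 0))
    (hg_nonneg : ∀ t ∈ Ioi (0 : ℝ), 0 ≤ g t)
    (hsurv : ∀ t ∈ Ioi (0 : ℝ), P {ω | t < X ω} = ENNReal.ofReal (g t)) :
    Integrable X P ∧ ∫ ω, X ω ∂P = ∫ t in Ioi 0, g t := by
  have hlintegral : ∫⁻ ω, ENNReal.ofReal (X ω) ∂P = ENNReal.ofReal (∫ t in Ioi 0, g t) := by
    rw [lintegral_eq_lintegral_meas_lt P hX_nonneg hX,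
      setLIntegral_congr_fun measurableSet_Ioi hsurv,
      ofReal_integral_eq_lintegral_ofReal hg ((ae_restrict_mem measurableSet_Ioi).mono hg_nonneg)]
  have hint : Integrable X P := ⟨hX.aestronglyMeasurable, by
    rw [hasFiniteIntegral_iff_ofReal hX_nonneg, hlintegral]; exact ENNReal.ofReal_lt_top⟩
  refine ⟨hint, ?_⟩
  rw [integral_eq_lintegral_of_nonneg_ae hX_nonneg hX.aestronglyMeasurable, hlintegral,
    ENNReal.toReal_ofReal (setIntegral_nonneg measurableSet_Ioi hg_nonneg)]

lemma measure_lt_iSup_eq_one_sub_prod [IsProbabilityMeasure P] {ι : Type*} [Fintype ι]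
    [Nonempty ι] {Y : ι → Ω → ℝ} (hY : ∀ i, Measurable (Y i)) (hindep : iIndepFun Y P)
    (t : ℝ) :
    P {ω | t < ⨆ i, Y i ω} = 1 - ∏ i, P (Y i ⁻¹' Iic t) := by
  have hset : {ω | t < ⨆ i, Y i ω} = (⋂ i, Y i ⁻¹' Iic t)ᶜ := by
    ext ω
    simpa using lt_ciSup_iff (finite_range fun i ↦ Y i ω).bddAbove
  rw [hset, prob_compl_eq_one_sub (.iInter fun i ↦ hY i measurableSet_Iic)]
  congr 1
  simpa using hindep.measure_inter_preimage_eq_mul univ (fun _ _ ↦ measurableSet_Iic (a := t))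

lemma ae_nonneg_of_map_eq_expMeasure {X : Ω → ℝ} (hX : Measurable X) {r : ℝ}
    (hlaw : P.map X = expMeasure r) : 0 ≤ᵐ[P] X := by
  have hIio : expMeasure r (Iio 0) = 0 := by
    rw [expMeasure, gammaMeasure, withDensity_apply _ measurableSet_Iio]
    exact lintegral_gammaPDF_of_nonpos le_rfl
  refine ae_of_ae_map (p := fun x ↦ 0 ≤ x) hX.aemeasurable ?_
  rw [hlaw]
  filter_upwards [measure_eq_zero_iff_ae_notMem.mp hIio] with x hx
  simpa using hx

lemma measure_preimage_Iic_of_map_eq_expMeasure [IsProbabilityMeasure P] {X : Ω → ℝ}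
    (hX : Measurable X) {r : ℝ} (hr : 0 < r) (hlaw : P.map X = expMeasure r) {t : ℝ}
    (ht : 0 ≤ t) : P (X ⁻¹' Iic t) = ENNReal.ofReal (1 - exp (-(r * t))) := by
  have := isProbabilityMeasure_expMeasure hr
  rw [← Measure.map_apply hX measurableSet_Iic, hlaw, ← ofReal_cdf, cdf_expMeasure_eq hr,
    if_pos ht]

end Survival

section IidExponential

variable {Ω : Type*} [MeasurableSpace Ω] {P : Measure Ω} [IsProbabilityMeasure P] {r : ℝ}

theorem integrable_iSup_and_integral_iSup_of_map_eq_expMeasure {ι : Type*} [Fintype ι]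
    [Nonempty ι] {Y : ι → Ω → ℝ} (hY : ∀ i, Measurable (Y i)) (hr : 0 < r)
    (hlaw : ∀ i, P.map (Y i) = expMeasure r) (hindep : iIndepFun Y P) :
    Integrable (fun ω ↦ ⨆ i, Y i ω) P ∧
      ∫ ω, ⨆ i, Y i ω ∂P = harmonic (Fintype.card ι) / r := by
  have hcdf_mem : ∀ t ∈ Ioi (0 : ℝ), 0 ≤ 1 - exp (-(r * t)) ∧ 1 - exp (-(r * t)) ≤ 1 :=
    fun t ht ↦ ⟨sub_nonneg.mpr (exp_le_one_iff.mpr (by nlinarith [mem_Ioi.mp ht])),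
      sub_le_self _ (exp_pos _).le⟩
  have hnonneg : 0 ≤ᵐ[P] fun ω ↦ ⨆ i, Y i ω := by
    obtain ⟨i⟩ := ‹Nonempty ι›
    filter_upwards [ae_nonneg_of_map_eq_expMeasure (hY i) (hlaw i)] with ω hω
    exact hω.trans (le_ciSup (finite_range fun i ↦ Y i ω).bddAbove i)
  refine (integrable_and_integral_eq_of_meas_lt_eq_ofReal (Measurable.iSup hY).aemeasurable
    hnonneg (integrableOn_one_sub_one_sub_exp_pow hr (Fintype.card ι))
    (fun t ht ↦ sub_nonneg.mpr (pow_le_one₀ (hcdf_mem t ht).1 (hcdf_mem t ht).2))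
    fun t ht ↦ ?_).imp_right (·.trans (integral_one_sub_one_sub_exp_pow hr _))
  simp only [measure_lt_iSup_eq_one_sub_prod hY hindep,
    measure_preimage_Iic_of_map_eq_expMeasure (hY _) hr (hlaw _) (le_of_lt ht), prod_const,
    card_univ]
  rw [← ENNReal.ofReal_pow (hcdf_mem t ht).1, ← ENNReal.ofReal_one,
    ← ENNReal.ofReal_sub _ (pow_nonneg (hcdf_mem t ht).1 _)]

theorem integrable_and_integral_of_map_eq_expMeasure {X : Ω → ℝ} (hX : Measurable X)
    (hr : 0 < r) (hlaw : P.map X = expMeasure r) :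
    Integrable X P ∧ ∫ ω, X ω ∂P = 1 / r := by
  simpa using integrable_iSup_and_integral_iSup_of_map_eq_expMeasure (ι := Unit) (fun _ ↦ hX) hr
    (fun _ ↦ hlaw) (iIndepFun.of_subsingleton)

end IidExponential

/-- expected tiny-tasks split-merge job service time:
`E[Δ] = (1/μ)·(k/l + Σ_{i=2}^{l} 1/i)` where `Δ = max_{i∈[1,l]} Y_i + Σ_{j=1}^{k−l} Z_j`
with `Y_i` i.i.d. `Exp(μ)`, `Z_j` i.i.d. `Exp(lμ)`, all mutually independent. -/
theorem tiny_tasks_split_merge_mean_service_time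
    {Ω : Type*} [MeasurableSpace Ω] (P : Measure Ω) [IsProbabilityMeasure P]
    (l k : ℕ) (hl : 1 ≤ l) (hlk : l ≤ k) (μ : ℝ) (hμ : 0 < μ)
    (Y : Fin l → Ω → ℝ) (Z : Fin (k - l) → Ω → ℝ)
    (hYmeas : ∀ i, Measurable (Y i)) (hZmeas : ∀ j, Measurable (Z j))
    (hYlaw : ∀ i, Measure.map (Y i) P = expMeasure μ)
    (hZlaw : ∀ j, Measure.map (Z j) P = expMeasure (l * μ))
    (hindep : iIndepFun (Sum.elim Y Z) P)
    (Δ : Ω → ℝ) (hΔ : ∀ ω, Δ ω = (⨆ i, Y i ω) + ∑ j, Z j ω) :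
    ∫ ω, Δ ω ∂P = (1 / μ) * ((k : ℝ) / (l : ℝ) + ∑ i ∈ Finset.Icc 2 l, (1 : ℝ) / (i : ℝ)) := by
  have : Nonempty (Fin l) := Fin.pos_iff_nonempty.mp hl
  obtain ⟨hmax_int, hmax⟩ := integrable_iSup_and_integral_iSup_of_map_eq_expMeasure hYmeas hμ
    hYlaw (hindep.precomp (g := Sum.inl) Sum.inl_injective)
  have hgap j := integrable_and_integral_of_map_eq_expMeasure (hZmeas j) (by positivity) (hZlaw j)
  have hharmonic : (harmonic l : ℝ) = 1 + ∑ i ∈ Icc 2 l, (1 : ℝ) / i := by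
    rw [harmonic_eq_sum_Icc, ← Finset.insert_Icc_add_one_left_eq_Icc hl, sum_insert (by simp)]
    push_cast
    simp
  obtain rfl : Δ = _ := funext hΔ
  rw [integral_add hmax_int (integrable_finsetSum _ fun j _ ↦ (hgap j).1),
    integral_finsetSum _ fun j _ ↦ (hgap j).1, hmax]
  simp only [fun j ↦ (hgap j).2, sum_const, card_univ, Fintype.card_fin, nsmul_eq_mul,
    Nat.cast_sub hlk, hharmonic]
  field_simp
  ring
end

section
/- Let l ≥ 1 be a natural number, μ > 0, and let Y₁,…,Y_l be i.i.d. exponential random variables with rate μ. Then max_{i∈[1,l]} Y_i has the same distribution as Σ_{i=1}^{l} Y_i / i. -/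
/-!
Both sides have distribution function `t ↦ (1 - e^{-μt})^l` on `t ≥ 0` (and `0` on `t < 0`).
For the maximum this is independence. For the sum, `Y i / (i + 1) ∼ Exp((i + 1)μ)`, and one
inducts on the number of summands: convolving `(1 - e^{-μt})^k` with `Exp((k + 1)μ)` gives
`∫₀ᵗ (k + 1)μ e^{-μw} (e^{-μw} - e^{-μt})^k dw = (1 - e^{-μt})^{k + 1}`.
-/

open MeasureTheory ProbabilityTheory Finset Real Set

noncomputable def maxExpCDF (μ : ℝ) (k : ℕ) (t : ℝ) : ℝ :=
  if 0 ≤ t then (1 - exp (-(μ * t))) ^ k else 0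

lemma maxExpCDF_nonneg {μ : ℝ} (hμ : 0 ≤ μ) (k : ℕ) (t : ℝ) : 0 ≤ maxExpCDF μ k t := by
  unfold maxExpCDF
  split_ifs with ht
  · exact pow_nonneg (sub_nonneg.2 (exp_le_one_iff.2 (by nlinarith))) k
  · exact le_rfl

lemma maxExpCDF_one_pow {k : ℕ} (hk : k ≠ 0) (μ t : ℝ) :
    maxExpCDF μ 1 t ^ k = maxExpCDF μ k t := by
  unfold maxExpCDF
  split_ifs <;> simp [hk]

lemma maxExpCDF_mul_right {c : ℝ} (hc : 0 < c) (μ : ℝ) (k : ℕ) (t : ℝ) :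
    maxExpCDF μ k (t * c) = maxExpCDF (c * μ) k t := by
  simp only [maxExpCDF, mul_comm t c, mul_nonneg_iff_of_pos_left hc, mul_left_comm μ c t,
    mul_assoc]

lemma measurable_maxExpCDF (μ : ℝ) (k : ℕ) : Measurable (maxExpCDF μ k) :=
  Measurable.ite measurableSet_Ici (by fun_prop) measurable_const

lemma expMeasure_Iic {r : ℝ} (hr : 0 < r) (t : ℝ) :
    expMeasure r (Iic t) = ENNReal.ofReal (maxExpCDF r 1 t) := by
  rw [expMeasure, gammaMeasure, withDensity_apply _ measurableSet_Iic]
  simp only [maxExpCDF, pow_one]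
  exact lintegral_exponentialPDF_eq_antiDeriv hr t

lemma map_div_const_expMeasure {μ c : ℝ} (hμ : 0 < μ) (hc : 0 < c) :
    (expMeasure μ).map (· / c) = expMeasure (c * μ) := by
  have := isProbabilityMeasure_expMeasure hμ
  refine Measure.ext_of_Iic _ _ fun t => ?_
  have hpre : (· / c) ⁻¹' Iic t = Iic (t * c) := by ext x; simp [div_le_iff₀ hc]
  rw [Measure.map_apply (by fun_prop) measurableSet_Iic, hpre, expMeasure_Iic hμ,
    expMeasure_Iic (mul_pos hc hμ), maxExpCDF_mul_right hc]

lemma conv_apply_Iic (ρ ν : Measure ℝ) [SFinite ν] (t : ℝ) :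
    (ρ ∗ ν) (Iic t) = ∫⁻ w, ν (Iic (t - w)) ∂ρ := by
  rw [← lintegral_indicator_one measurableSet_Iic,
    Measure.lintegral_conv (measurable_one.indicator measurableSet_Iic)]
  refine lintegral_congr fun w => ?_
  rw [← lintegral_indicator_one measurableSet_Iic]
  congr 1
  ext y
  simp [indicator, le_sub_iff_add_le']

lemma hasDerivAt_neg_exp_sub_exp_pow (μ t : ℝ) (k : ℕ) (w : ℝ) :
    HasDerivAt (fun w => -(exp (-(μ * w)) - exp (-(μ * t))) ^ (k + 1))
      ((k + 1) * μ * exp (-(μ * w)) * (exp (-(μ * w)) - exp (-(μ * t))) ^ k) w := by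
  have hexp : HasDerivAt (fun w => exp (-(μ * w))) (exp (-(μ * w)) * -μ) w := by
    simpa [neg_mul] using ((hasDerivAt_id w).const_mul (-μ)).exp
  refine (((hexp.sub_const (exp (-(μ * t)))).pow (k + 1)).neg).congr_deriv ?_
  push_cast
  ring

lemma exponentialPDF_mul_maxExpCDF_sub {μ : ℝ} (hμ : 0 ≤ μ) (k : ℕ) (t w : ℝ) :
    exponentialPDF ((k + 1) * μ) w * ENNReal.ofReal (maxExpCDF μ k (t - w)) =
      (Icc 0 t).indicator (fun w => ENNReal.ofReal
        ((k + 1) * μ * exp (-(μ * w)) * (exp (-(μ * w)) - exp (-(μ * t))) ^ k)) w := by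
  rw [exponentialPDF_eq, maxExpCDF]
  by_cases hw : w ∈ Icc 0 t
  · rw [indicator_of_mem hw, if_pos hw.1, if_pos (sub_nonneg.2 hw.2),
      ← ENNReal.ofReal_mul (by positivity)]
    congr 1
    have hsplit : exp (-((k + 1) * μ * w)) = exp (-(μ * w)) * exp (-(μ * w)) ^ k := by
      rw [← exp_nat_mul, ← exp_add]; ring_nf
    have hfactor :
        exp (-(μ * w)) - exp (-(μ * t)) = exp (-(μ * w)) * (1 - exp (-(μ * (t - w)))) := by
      rw [mul_sub, mul_one, ← exp_add]; ring_nf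
    rw [hsplit, hfactor, mul_pow]
    ring
  · rw [indicator_of_notMem hw]
    rcases not_and_or.1 hw with hw0 | hwt
    · rw [if_neg hw0, ENNReal.ofReal_zero, zero_mul]
    · rw [if_neg (show ¬0 ≤ t - w by linarith [not_le.1 hwt]), ENNReal.ofReal_zero, mul_zero]

lemma lintegral_maxExpCDF_sub_expMeasure {μ : ℝ} (hμ : 0 ≤ μ) (k : ℕ) (t : ℝ) :
    ∫⁻ w, ENNReal.ofReal (maxExpCDF μ k (t - w)) ∂expMeasure ((k + 1) * μ) =
      ENNReal.ofReal (maxExpCDF μ (k + 1) t) := by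
  change ∫⁻ w, _ ∂volume.withDensity (exponentialPDF ((k + 1) * μ)) = _
  have hpdf : Measurable (exponentialPDF ((k + 1) * μ)) :=
    (measurable_exponentialPDFReal _).ennreal_ofReal
  have hG : Measurable fun w => ENNReal.ofReal (maxExpCDF μ k (t - w)) :=
    ((measurable_maxExpCDF μ k).comp (measurable_const.sub measurable_id)).ennreal_ofReal
  rw [lintegral_withDensity_eq_lintegral_mul _ hpdf hG]
  simp_rw [Pi.mul_apply, exponentialPDF_mul_maxExpCDF_sub hμ,
    lintegral_indicator measurableSet_Icc, maxExpCDF]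
  set f := fun w => (k + 1) * μ * exp (-(μ * w)) * (exp (-(μ * w)) - exp (-(μ * t))) ^ k
  have hf : Continuous f := by fun_prop
  split_ifs with ht
  · have hnonneg : 0 ≤ᵐ[volume.restrict (Icc 0 t)] f := by
      refine (ae_restrict_iff' measurableSet_Icc).2 (ae_of_all _ fun w hw => ?_)
      have : exp (-(μ * t)) ≤ exp (-(μ * w)) := exp_le_exp.2 (by nlinarith [hw.2])
      exact mul_nonneg (by positivity) (pow_nonneg (sub_nonneg.2 this) k)
    rw [← ofReal_integral_eq_lintegral_ofReal hf.integrableOn_Icc hnonneg,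
      integral_Icc_eq_integral_Ioc, ← intervalIntegral.integral_of_le ht,
      intervalIntegral.integral_eq_sub_of_hasDerivAt
        (fun w _ => hasDerivAt_neg_exp_sub_exp_pow μ t k w) (hf.intervalIntegrable 0 t)]
    simp
  · rw [Icc_eq_empty ht, Measure.restrict_empty, lintegral_zero_measure, ENNReal.ofReal_zero]

theorem map_sum_Iic_of_iIndepFun_expMeasure {Ω : Type*} [MeasurableSpace Ω] {P : Measure Ω}
    [IsProbabilityMeasure P] {μ : ℝ} (hμ : 0 ≤ μ) {n : ℕ} {Z : Fin n → Ω → ℝ}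
    (hmeas : ∀ i, Measurable (Z i)) (hlaw : ∀ i, P.map (Z i) = expMeasure (((i : ℕ) + 1) * μ))
    (hindep : iIndepFun Z P) (t : ℝ) :
    P.map (fun ω => ∑ i, Z i ω) (Iic t) = ENNReal.ofReal (maxExpCDF μ n t) := by
  induction n generalizing t with
  | zero =>
    simp [Measure.map_const, maxExpCDF, indicator, apply_ite ENNReal.ofReal]
  | succ n ih =>
    have hS : ∀ s, P.map (fun ω => ∑ i : Fin n, Z i.castSucc ω) (Iic s) =
        ENNReal.ofReal (maxExpCDF μ n s) :=
      ih (fun i => hmeas _) (fun i => by simpa using hlaw i.castSucc)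
        (hindep.precomp (Fin.castSucc_injective n))
    have hsum :
        (fun ω => ∑ i, Z i ω) = Z (Fin.last n) + fun ω => ∑ i : Fin n, Z i.castSucc ω := by
      ext ω
      simp [Fin.sum_univ_castSucc, add_comm]
    have hind : IndepFun (Z (Fin.last n)) (fun ω => ∑ i : Fin n, Z i.castSucc ω) P := by
      have := hindep.indepFun_finsetSum_of_notMem hmeas (s := univ.map Fin.castSuccEmb)
        (i := Fin.last n) (by simp)
      convert this.symm using 1
      ext ω
      simp [Finset.sum_apply]
    rw [hsum, hind.map_add_eq_map_conv_map₀ (hmeas _).aemeasurable (by fun_prop), hlaw,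
      conv_apply_Iic]
    simp_rw [hS]
    simpa using lintegral_maxExpCDF_sub_expMeasure hμ n t

theorem map_iSup_Iic_of_iIndepFun {Ω ι : Type*} [MeasurableSpace Ω] {P : Measure Ω}
    [Fintype ι] [Nonempty ι] {Y : ι → Ω → ℝ} (hmeas : ∀ i, Measurable (Y i))
    (hindep : iIndepFun Y P) (t : ℝ) :
    P.map (fun ω => ⨆ i, Y i ω) (Iic t) = ∏ i, P.map (Y i) (Iic t) := by
  have hset : (fun ω => ⨆ i, Y i ω) ⁻¹' Iic t = ⋂ i, Y i ⁻¹' Iic t := by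
    ext ω
    simp [ciSup_le_iff (finite_range _).bddAbove]
  rw [Measure.map_apply (Measurable.iSup hmeas) measurableSet_Iic, hset,
    hindep.meas_iInter fun i => ⟨Iic t, measurableSet_Iic, rfl⟩]
  simp_rw [Measure.map_apply (hmeas _) measurableSet_Iic]

/-- for `Y₁,…,Y_l` i.i.d. `Exp(μ)`, the maximum `max_{i∈[1,l]} Y_i` has
the same distribution as `Σ_{i=1}^{l} Y_i / i`. -/
theorem max_of_iid_exponentials_eq_dist_sum
    {Ω : Type*} [MeasurableSpace Ω] (P : Measure Ω) [IsProbabilityMeasure P]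
    (l : ℕ) (hl : 1 ≤ l) (μ : ℝ) (hμ : 0 < μ)
    (Y : Fin l → Ω → ℝ)
    (hYmeas : ∀ i, Measurable (Y i))
    (hYlaw : ∀ i, Measure.map (Y i) P = expMeasure μ)
    (hindep : iIndepFun Y P) :
    Measure.map (fun ω => ⨆ i, Y i ω) P
      = Measure.map (fun ω => ∑ i : Fin l, Y i ω / ((i : ℕ) + 1 : ℝ)) P := by
  have : Nonempty (Fin l) := ⟨⟨0, hl⟩⟩
  have hlaw (i : Fin l) :
      P.map (fun ω => Y i ω / ((i : ℕ) + 1 : ℝ)) = expMeasure (((i : ℕ) + 1) * μ) := by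
    rw [← map_div_const_expMeasure hμ (by positivity), ← hYlaw i,
      Measure.map_map (by fun_prop) (hYmeas i)]
    rfl
  refine Measure.ext_of_Iic _ _ fun t => ?_
  rw [map_iSup_Iic_of_iIndepFun hYmeas hindep, map_sum_Iic_of_iIndepFun_expMeasure hμ.le
    (fun i => (hYmeas i).div_const _) hlaw (hindep.comp _ fun i => measurable_id.div_const _)]
  simp_rw [hYlaw, expMeasure_Iic hμ]
  rw [prod_const, card_univ, Fintype.card_fin,
    ← ENNReal.ofReal_pow (maxExpCDF_nonneg hμ.le 1 t), maxExpCDF_one_pow (by omega)]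
end

section
/- Let l ≥ 1 and k ≥ 1 be natural numbers, μ > 0, and fix i ∈ [1, k]. Let (Z_j(n))_{j∈[1,k], n≥1} be i.i.d. exponential random variables with rate lμ, let (a_n)_{n≥2} be i.i.d. nonnegative random variables, all mutually independent, and suppose θ ∈ (0, lμ) satisfies (lμ/(lμ−θ))^k · E[e^{−θa₂}] ≤ 1. Define W(1) = 0 and W(n) = max{0, W(n−1) + Σ_{j=1}^{k} Z_j(n−1) − a_n} for n ≥ 2, and define the waiting time of task i of job n as W_i(n) = W(n) + Σ_{j=1}^{i−1} Z_j(n). Then for every n ≥ 1 and τ ≥ 0, P[W_i(n) ≥ τ] ≤ (lμ/(lμ−θ))^{i−1} · e^{−θτ}. -/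
/-!
Kingman-type induction along the Lindley recursion. If `P[W(n) ≥ t] ≤ e^{-θt}` for all `t`
and the increment `V = Σ_j Z_j(n) - a_{n+1}` is independent of `W(n)`, then conditioning on `V`
gives `P[W(n) + V ≥ t] ≤ e^{-θt} E[e^{θV}]`, and `E[e^{θV}] = (lμ/(lμ-θ))^k E[e^{-θa₂}] ≤ 1`
is exactly the stability condition, so the bound passes to `W(n+1) = max 0 (W(n) + V)`.
The same estimate applied to `W_i(n) = W(n) + Σ_{j<i} Z_j(n)` yields one factor
`E[e^{θZ}] = lμ/(lμ-θ)` per gap. Independence holds because `W(n)` is measurable with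
respect to the σ-algebra generated by the inputs of the earlier jobs.
-/

open MeasureTheory ProbabilityTheory Real Finset

lemma lintegral_exp_mul_expMeasure {r θ : ℝ} (hr : 0 < r) (hθr : θ < r) :
    ∫⁻ x, ENNReal.ofReal (exp (θ * x)) ∂expMeasure r = ENNReal.ofReal (r / (r - θ)) := by
  have hdensity : exponentialPDF r * (fun x => ENNReal.ofReal (exp (θ * x)))
      = (Set.Ici 0).indicator fun x => ENNReal.ofReal (r * exp ((θ - r) * x)) := by
    ext x
    rcases lt_or_ge x 0 with hx | hx
    · simp [exponentialPDF_of_neg hx, hx]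
    · rw [Set.indicator_of_mem (Set.mem_Ici.2 hx), Pi.mul_apply, exponentialPDF_of_nonneg hx,
        ← ENNReal.ofReal_mul' (exp_pos _).le, mul_assoc, ← exp_add]
      ring_nf
  have hdecay : θ - r < 0 := by linarith
  rw [show expMeasure r = volume.withDensity (exponentialPDF r) from rfl,
    lintegral_withDensity_eq_lintegral_mul _ (f := exponentialPDF r)
      (measurable_exponentialPDFReal r).ennreal_ofReal (by fun_prop), hdensity,
    lintegral_indicator measurableSet_Ici, setLIntegral_congr Ioi_ae_eq_Ici.symm,
    ← ofReal_integral_eq_lintegral_ofReal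
      ((integrableOn_exp_mul_Ioi hdecay 0).const_mul r) (ae_of_all _ fun x => by positivity),
    integral_const_mul, integral_exp_mul_Ioi hdecay, mul_zero, exp_zero, neg_div, ← div_neg,
    neg_sub, mul_one_div]

section ExpTail

variable {Ω : Type*} [MeasurableSpace Ω] {P : Measure Ω} {θ : ℝ} {U V : Ω → ℝ}

def HasExpTail (P : Measure Ω) (θ : ℝ) (U : Ω → ℝ) : Prop :=
  ∀ t, P {ω | t ≤ U ω} ≤ ENNReal.ofReal (exp (-θ * t))

lemma hasExpTail_of_pos [IsProbabilityMeasure P] (hθ : 0 ≤ θ)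
    (h : ∀ t, 0 < t → P {ω | t ≤ U ω} ≤ ENNReal.ofReal (exp (-θ * t))) : HasExpTail P θ U := by
  intro t
  rcases le_or_gt t 0 with ht | ht
  · exact prob_le_one.trans (ENNReal.one_le_ofReal.2 (one_le_exp (by nlinarith)))
  · exact h t ht

lemma hasExpTail_zero [IsProbabilityMeasure P] (hθ : 0 ≤ θ) : HasExpTail P θ 0 :=
  hasExpTail_of_pos hθ fun t ht => by simp [ht.not_ge]

lemma HasExpTail.measure_le_add_le [IsFiniteMeasure P] (hU : HasExpTail P θ U)
    (hUm : Measurable U) (hVm : Measurable V) (hUV : IndepFun U V P) (s : ℝ) :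
    P {ω | s ≤ U ω + V ω} ≤
      ENNReal.ofReal (exp (-θ * s)) * ∫⁻ ω, ENNReal.ofReal (exp (θ * V ω)) ∂P := by
  have hsum : MeasurableSet {p : ℝ × ℝ | s ≤ p.1 + p.2} := by measurability
  have hexp : Measurable fun v : ℝ => ENNReal.ofReal (exp (θ * v)) := by fun_prop
  calc P {ω | s ≤ U ω + V ω}
      = ((P.map U).prod (P.map V)) {p : ℝ × ℝ | s ≤ p.1 + p.2} := by
        rw [← (indepFun_iff_map_prod_eq_prod_map_map hUm.aemeasurable hVm.aemeasurable).1 hUV,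
          Measure.map_apply (hUm.prodMk hVm) hsum]
        rfl
    _ = ∫⁻ v, P {ω | s - v ≤ U ω} ∂P.map V := by
        rw [Measure.prod_apply_symm hsum]
        refine lintegral_congr fun v => ?_
        rw [Measure.map_apply hUm (hsum.preimage (by fun_prop))]
        congr 1
        ext ω
        simp
    _ ≤ ∫⁻ v, ENNReal.ofReal (exp (-θ * s)) * ENNReal.ofReal (exp (θ * v)) ∂P.map V := by
        refine lintegral_mono fun v => (hU (s - v)).trans_eq ?_
        rw [← ENNReal.ofReal_mul (exp_pos _).le, ← exp_add]
        ring_nf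
    _ = ENNReal.ofReal (exp (-θ * s)) * ∫⁻ ω, ENNReal.ofReal (exp (θ * V ω)) ∂P := by
        rw [lintegral_const_mul _ hexp, lintegral_map hexp hVm]

lemma HasExpTail.max_zero_add [IsProbabilityMeasure P] (hU : HasExpTail P θ U) (hθ : 0 ≤ θ)
    (hUm : Measurable U) (hVm : Measurable V) (hUV : IndepFun U V P)
    (hV : ∫⁻ ω, ENNReal.ofReal (exp (θ * V ω)) ∂P ≤ 1) :
    HasExpTail P θ fun ω => max 0 (U ω + V ω) :=
  hasExpTail_of_pos hθ fun t ht => calc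
    P {ω | t ≤ max 0 (U ω + V ω)} = P {ω | t ≤ U ω + V ω} := by
      simp only [le_max_iff, ht.not_ge, false_or]
    _ ≤ ENNReal.ofReal (exp (-θ * t)) * ∫⁻ ω, ENNReal.ofReal (exp (θ * V ω)) ∂P :=
      hU.measure_le_add_le hUm hVm hUV t
    _ ≤ ENNReal.ofReal (exp (-θ * t)) := mul_le_of_le_one_right' hV

end ExpTail

lemma measurable_iSup_comap_of_mem {Ω ι β : Type*} [mβ : MeasurableSpace β] {f : ι → Ω → β}
    {S : Set ι} {i : ι} (hi : i ∈ S) : Measurable[⨆ j ∈ S, mβ.comap (f j)] (f i) :=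
  (comap_measurable (f i)).mono (le_iSup₂ (f := fun j (_ : j ∈ S) => mβ.comap (f j)) i hi) le_rfl

lemma Measurable.of_measurable_iSup_comap {Ω ι β γ : Type*} [MeasurableSpace Ω]
    [mβ : MeasurableSpace β] [MeasurableSpace γ] {f : ι → Ω → β} (hf : ∀ i, Measurable (f i))
    {S : Set ι} {U : Ω → γ} (hU : Measurable[⨆ i ∈ S, mβ.comap (f i)] U) : Measurable U :=
  hU.mono (iSup₂_le fun i _ => (hf i).comap_le) le_rfl

namespace ProbabilityTheory

lemma iIndepFun.lintegral_exp_mul_sum {Ω κ : Type*} [MeasurableSpace Ω] {P : Measure Ω}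
    {Y : κ → Ω → ℝ} (hY : iIndepFun Y P) (hYm : ∀ i, Measurable (Y i)) (θ : ℝ) (s : Finset κ) :
    ∫⁻ ω, ENNReal.ofReal (exp (θ * ∑ i ∈ s, Y i ω)) ∂P =
      ∏ i ∈ s, ∫⁻ ω, ENNReal.ofReal (exp (θ * Y i ω)) ∂P := by
  have hexp : Measurable fun y : ℝ => ENNReal.ofReal (exp (θ * y)) := by fun_prop
  simp_rw [Finset.mul_sum, exp_sum, ENNReal.ofReal_prod_of_nonneg fun _ _ => (exp_pos _).le]
  exact lintegral_prod_eq_prod_lintegral_of_indepFun s _ (hY.comp _ fun _ => hexp)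
    fun i => hexp.comp (hYm i)

lemma iIndepFun.indepFun_of_measurable_iSup {Ω ι γ δ : Type*} {_ : MeasurableSpace Ω}
    {P : Measure Ω} {β : ι → Type*} [m : ∀ i, MeasurableSpace (β i)]
    [MeasurableSpace γ] [MeasurableSpace δ] {f : ∀ i, Ω → β i}
    (hf : iIndepFun f P) (hmeas : ∀ i, Measurable (f i)) {S T : Set ι} (hST : Disjoint S T)
    {U : Ω → γ} {V : Ω → δ} (hU : Measurable[⨆ i ∈ S, (m i).comap (f i)] U)
    (hV : Measurable[⨆ i ∈ T, (m i).comap (f i)] V) : IndepFun U V P := by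
  rw [IndepFun_iff_Indep]
  exact indep_of_indep_of_le_right (indep_of_indep_of_le_left
    (indep_iSup_of_disjoint (fun i => (hmeas i).comap_le) ((iIndepFun_iff_iIndep _ _ _).1 hf) hST)
    hU.comap_le) hV.comap_le

end ProbabilityTheory

section ForkJoin

variable {Ω : Type*} {k : ℕ} {Z : Fin k → ℕ → Ω → ℝ} {a : ℕ → Ω → ℝ} {W : ℕ → Ω → ℝ}

structure IsWaitingTime (Z : Fin k → ℕ → Ω → ℝ) (a : ℕ → Ω → ℝ) (W : ℕ → Ω → ℝ) : Prop where
  apply_one : ∀ ω, W 1 ω = 0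
  apply_of_two_le : ∀ n, 2 ≤ n → ∀ ω, W n ω = max 0 (W (n - 1) ω + (∑ j, Z j (n - 1) ω) - a n ω)

lemma IsWaitingTime.one_eq (hW : IsWaitingTime Z a W) : W 1 = 0 :=
  funext hW.apply_one

lemma IsWaitingTime.succ_eq (hW : IsWaitingTime Z a W) {n : ℕ} (hn : 1 ≤ n) :
    W (n + 1) = fun ω => max 0 (W n ω + (∑ j, Z j n ω - a (n + 1) ω)) :=
  funext fun ω => by rw [hW.apply_of_two_le (n + 1) (by omega), Nat.add_sub_cancel, add_sub_assoc]

def jobInputs (Z : Fin k → ℕ → Ω → ℝ) (a : ℕ → Ω → ℝ) : (Fin k × ℕ) ⊕ ℕ → Ω → ℝ :=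
  Sum.elim (fun p => Z p.1 p.2) a

/-- The inputs that `W n` depends on: the gaps of jobs `m < n` and the interarrival
times `a m`, `m ≤ n`. -/
def jobPast (k n : ℕ) : Set ((Fin k × ℕ) ⊕ ℕ) :=
  Sum.elim (fun p => p.2 < n) (· ≤ n)

abbrev inputSigma (Z : Fin k → ℕ → Ω → ℝ) (a : ℕ → Ω → ℝ) (S : Set ((Fin k × ℕ) ⊕ ℕ)) :
    MeasurableSpace Ω :=
  ⨆ x ∈ S, MeasurableSpace.comap (jobInputs Z a x) inferInstance

lemma measurable_gap_inputSigma {S : Set ((Fin k × ℕ) ⊕ ℕ)} {j : Fin k} {n : ℕ}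
    (h : .inl (j, n) ∈ S) : Measurable[inputSigma Z a S] (Z j n) :=
  measurable_iSup_comap_of_mem h

lemma measurable_interarrival_inputSigma {S : Set ((Fin k × ℕ) ⊕ ℕ)} {n : ℕ}
    (h : .inr n ∈ S) : Measurable[inputSigma Z a S] (a n) :=
  measurable_iSup_comap_of_mem h

lemma measurable_sum_gaps_compl_jobPast (n : ℕ) (F : Finset (Fin k)) :
    Measurable[inputSigma Z a (jobPast k n)ᶜ] fun ω => ∑ j ∈ F, Z j n ω :=
  Finset.measurable_sum _ fun _ _ => measurable_gap_inputSigma (show ¬ n < n from lt_irrefl n)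

lemma IsWaitingTime.measurable_past (hW : IsWaitingTime Z a W) {n : ℕ} (hn : 1 ≤ n) :
    Measurable[inputSigma Z a (jobPast k n)] (W n) := by
  induction n, hn using Nat.le_induction with
  | base => rw [hW.one_eq]; exact measurable_const
  | succ n hn ih =>
    have hmono : inputSigma Z a (jobPast k n) ≤ inputSigma Z a (jobPast k (n + 1)) :=
      biSup_mono fun
        | .inl _, (h : _ < n) => (show _ < n + 1 by omega)
        | .inr _, (h : _ ≤ n) => (show _ ≤ n + 1 by omega)
    have hZ (j : Fin k) := measurable_gap_inputSigma (Z := Z) (a := a) (S := jobPast k (n + 1))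
      (j := j) (show n < n + 1 by omega)
    have ha := measurable_interarrival_inputSigma (Z := Z) (a := a) (S := jobPast k (n + 1))
      (show n + 1 ≤ n + 1 from le_rfl)
    have hWn := ih.mono hmono le_rfl
    rw [hW.succ_eq hn]
    fun_prop

variable [MeasurableSpace Ω]

structure ForkJoinInputs (P : Measure Ω) (r : ℝ) (Z : Fin k → ℕ → Ω → ℝ) (a : ℕ → Ω → ℝ) :
    Prop where
  measurable_gap : ∀ j n, Measurable (Z j n)
  measurable_interarrival : ∀ n, Measurable (a n)
  map_gap : ∀ j n, 1 ≤ n → P.map (Z j n) = expMeasure r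
  interarrival_nonneg : ∀ n ω, 2 ≤ n → 0 ≤ a n ω
  map_interarrival : ∀ n, 2 ≤ n → P.map (a n) = P.map (a 2)
  indep : iIndepFun (jobInputs Z a) P

variable {P : Measure Ω} {r θ : ℝ}

namespace ForkJoinInputs

lemma measurable_jobInputs (h : ForkJoinInputs P r Z a) : ∀ x, Measurable (jobInputs Z a x)
  | .inl (j, n) => h.measurable_gap j n
  | .inr n => h.measurable_interarrival n

lemma measurable_waitingTime (h : ForkJoinInputs P r Z a) (hW : IsWaitingTime Z a W) {n : ℕ}
    (hn : 1 ≤ n) : Measurable (W n) :=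
  (hW.measurable_past hn).of_measurable_iSup_comap h.measurable_jobInputs

lemma indepFun_waitingTime (h : ForkJoinInputs P r Z a) (hW : IsWaitingTime Z a W) {n : ℕ}
    (hn : 1 ≤ n) {V : Ω → ℝ} (hV : Measurable[inputSigma Z a (jobPast k n)ᶜ] V) :
    IndepFun (W n) V P :=
  h.indep.indepFun_of_measurable_iSup h.measurable_jobInputs disjoint_compl_right
    (hW.measurable_past hn) hV

lemma lintegral_exp_mul_sum_gaps (h : ForkJoinInputs P r Z a) (hr : 0 < r) (hθr : θ < r)
    {n : ℕ} (hn : 1 ≤ n) (F : Finset (Fin k)) :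
    ∫⁻ ω, ENNReal.ofReal (exp (θ * ∑ j ∈ F, Z j n ω)) ∂P = ENNReal.ofReal (r / (r - θ)) ^ #F := by
  have hexp : Measurable fun x : ℝ => ENNReal.ofReal (exp (θ * x)) := by fun_prop
  have hrow : iIndepFun (fun j => Z j n) P :=
    h.indep.precomp (g := fun j => .inl (j, n))
      (Sum.inl_injective.comp (Prod.mk_left_injective n))
  rw [hrow.lintegral_exp_mul_sum (h.measurable_gap · n), ← prod_const]
  refine prod_congr rfl fun j _ => ?_
  rw [← lintegral_map hexp (h.measurable_gap j n), h.map_gap j n hn,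
    lintegral_exp_mul_expMeasure hr hθr]

lemma lintegral_exp_neg_mul_interarrival [IsFiniteMeasure P] (h : ForkJoinInputs P r Z a)
    (hθ : 0 ≤ θ) {n : ℕ} (hn : 2 ≤ n) :
    ∫⁻ ω, ENNReal.ofReal (exp (-θ * a n ω)) ∂P = ENNReal.ofReal (mgf (a 2) P (-θ)) := by
  have hexp : Measurable fun x : ℝ => ENNReal.ofReal (exp (-θ * x)) := by fun_prop
  have hbdd : Integrable (fun ω => exp (-θ * a 2 ω)) P :=
    .of_bound ((h.measurable_interarrival 2).const_mul (-θ)).exp.aestronglyMeasurable 1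
      (ae_of_all _ fun ω => by
        rw [norm_of_nonneg (exp_pos _).le, exp_le_one_iff]
        nlinarith [h.interarrival_nonneg 2 ω le_rfl])
  rw [← lintegral_map hexp (h.measurable_interarrival n), h.map_interarrival n hn,
    lintegral_map hexp (h.measurable_interarrival 2),
    ← ofReal_integral_eq_lintegral_ofReal hbdd (ae_of_all _ fun _ => (exp_pos _).le)]
  rfl

lemma lintegral_exp_mul_increment_le_one [IsProbabilityMeasure P] (h : ForkJoinInputs P r Z a)
    (hθ : θ ∈ Set.Ioo 0 r) (hstab : (r / (r - θ)) ^ k * mgf (a 2) P (-θ) ≤ 1) {n : ℕ}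
    (hn : 1 ≤ n) : ∫⁻ ω, ENNReal.ofReal (exp (θ * (∑ j, Z j n ω - a (n + 1) ω))) ∂P ≤ 1 := by
  have hsplit (ω : Ω) : ENNReal.ofReal (exp (θ * (∑ j, Z j n ω - a (n + 1) ω))) =
      ENNReal.ofReal (exp (θ * ∑ j, Z j n ω)) * ENNReal.ofReal (exp (-θ * a (n + 1) ω)) := by
    rw [← ENNReal.ofReal_mul (exp_pos _).le, ← exp_add]
    ring_nf
  have hZ (j : Fin k) := measurable_gap_inputSigma (Z := Z) (a := a) (S := Set.range Sum.inl)
    (j := j) (n := n) ⟨_, rfl⟩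
  have ha := measurable_interarrival_inputSigma (Z := Z) (a := a) (S := Set.range Sum.inr)
    (n := n + 1) ⟨_, rfl⟩
  have hindep : IndepFun (fun ω => ENNReal.ofReal (exp (θ * ∑ j, Z j n ω)))
      (fun ω => ENNReal.ofReal (exp (-θ * a (n + 1) ω))) P :=
    h.indep.indepFun_of_measurable_iSup h.measurable_jobInputs
      Set.isCompl_range_inl_range_inr.disjoint (by fun_prop) (by fun_prop)
  have hZm := (h.measurable_gap · n)
  have ham := h.measurable_interarrival (n + 1)
  have hr : 0 < r := hθ.1.trans hθ.2
  have hρ : 0 ≤ r / (r - θ) := div_nonneg hr.le (sub_pos.2 hθ.2).le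
  calc ∫⁻ ω, ENNReal.ofReal (exp (θ * (∑ j, Z j n ω - a (n + 1) ω))) ∂P
      = (∫⁻ ω, ENNReal.ofReal (exp (θ * ∑ j, Z j n ω)) ∂P) *
          ∫⁻ ω, ENNReal.ofReal (exp (-θ * a (n + 1) ω)) ∂P := by
        simp_rw [hsplit]
        exact lintegral_mul_eq_lintegral_mul_lintegral_of_indepFun (by fun_prop) (by fun_prop)
          hindep
    _ = ENNReal.ofReal ((r / (r - θ)) ^ k * mgf (a 2) P (-θ)) := by
        rw [h.lintegral_exp_mul_sum_gaps hr hθ.2 hn, card_univ, Fintype.card_fin,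
          h.lintegral_exp_neg_mul_interarrival hθ.1.le (by omega),
          ENNReal.ofReal_mul (pow_nonneg hρ _), ENNReal.ofReal_pow hρ]
    _ ≤ 1 := ENNReal.ofReal_le_one.2 hstab

lemma hasExpTail_waitingTime [IsProbabilityMeasure P] (h : ForkJoinInputs P r Z a)
    (hW : IsWaitingTime Z a W) (hθ : θ ∈ Set.Ioo 0 r)
    (hstab : (r / (r - θ)) ^ k * mgf (a 2) P (-θ) ≤ 1) {n : ℕ} (hn : 1 ≤ n) :
    HasExpTail P θ (W n) := by
  induction n, hn using Nat.le_induction with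
  | base => rw [hW.one_eq]; exact hasExpTail_zero hθ.1.le
  | succ n hn ih =>
    have hfuture : Measurable[inputSigma Z a (jobPast k n)ᶜ] fun ω => ∑ j, Z j n ω - a (n + 1) ω :=
      (measurable_sum_gaps_compl_jobPast n univ).sub
        (measurable_interarrival_inputSigma (show ¬ n + 1 ≤ n by omega))
    rw [hW.succ_eq hn]
    exact ih.max_zero_add hθ.1.le (h.measurable_waitingTime hW hn)
      (hfuture.of_measurable_iSup_comap h.measurable_jobInputs)
      (h.indepFun_waitingTime hW hn hfuture) (h.lintegral_exp_mul_increment_le_one hθ hstab hn)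

end ForkJoinInputs

end ForkJoin

theorem tiny_tasks_fork_join_waiting_time_bound_general
    {Ω : Type*} [MeasurableSpace Ω] (P : Measure Ω) [IsProbabilityMeasure P]
    (l k : ℕ) (μ : ℝ)
    (i : ℕ) (hik : i ≤ k)
    (Z : Fin k → ℕ → Ω → ℝ) (a : ℕ → Ω → ℝ)
    (hZmeas : ∀ j n, Measurable (Z j n)) (hameas : ∀ n, Measurable (a n))
    (hZlaw : ∀ j n, 1 ≤ n → Measure.map (Z j n) P = expMeasure (l * μ))
    (hanonneg : ∀ n ω, 2 ≤ n → 0 ≤ a n ω)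
    (haid : ∀ n, 2 ≤ n → Measure.map (a n) P = Measure.map (a 2) P)
    (hindep : iIndepFun
      (Sum.elim (fun p : Fin k × ℕ => Z p.1 p.2) a) P)
    (θ : ℝ) (hθ : θ ∈ Set.Ioo 0 (l * μ))
    (hstab : (l * μ / (l * μ - θ)) ^ k * mgf (a 2) P (-θ) ≤ 1)
    (W : ℕ → Ω → ℝ)
    (hW1 : ∀ ω, W 1 ω = 0)
    (hWn : ∀ n, 2 ≤ n → ∀ ω,
      W n ω = max 0 (W (n - 1) ω + (∑ j, Z j (n - 1) ω) - a n ω))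
    (Wi : ℕ → Ω → ℝ)
    (hWi : ∀ n ω, Wi n ω = W n ω +
      ∑ j ∈ Finset.univ.filter (fun j : Fin k => (j : ℕ) < i - 1), Z j n ω) :
    ∀ n, 1 ≤ n → ∀ τ : ℝ, 0 ≤ τ →
      P {ω | τ ≤ Wi n ω} ≤
        ENNReal.ofReal ((l * μ / (l * μ - θ)) ^ (i - 1) * Real.exp (-θ * τ)) := by
  intro n hn τ _
  have h : ForkJoinInputs P (l * μ) Z a := ⟨hZmeas, hameas, hZlaw, hanonneg, haid, hindep⟩
  have hW : IsWaitingTime Z a W := ⟨hW1, hWn⟩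
  set F := univ.filter fun j : Fin k => (j : ℕ) < i - 1
  have hcard : #F = i - 1 := by rw [Fin.card_filter_val_lt]; omega
  have hr : 0 < (l : ℝ) * μ := hθ.1.trans hθ.2
  have hρ : 0 ≤ l * μ / (l * μ - θ) := div_nonneg hr.le (sub_pos.2 hθ.2).le
  calc P {ω | τ ≤ Wi n ω}
      ≤ ENNReal.ofReal (exp (-θ * τ)) * ∫⁻ ω, ENNReal.ofReal (exp (θ * ∑ j ∈ F, Z j n ω)) ∂P := by
        simp only [hWi n]
        exact (h.hasExpTail_waitingTime hW hθ hstab hn).measure_le_add_le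
          (h.measurable_waitingTime hW hn) (Finset.measurable_sum _ fun j _ => hZmeas j n)
          (h.indepFun_waitingTime hW hn (measurable_sum_gaps_compl_jobPast n F)) τ
    _ = ENNReal.ofReal (exp (-θ * τ)) * ENNReal.ofReal (l * μ / (l * μ - θ)) ^ (i - 1) := by
        rw [h.lintegral_exp_mul_sum_gaps hr hθ.2 hn, hcard]
    _ = ENNReal.ofReal ((l * μ / (l * μ - θ)) ^ (i - 1) * exp (-θ * τ)) := by
        rw [← ENNReal.ofReal_pow hρ, ← ENNReal.ofReal_mul (exp_pos _).le, mul_comm]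

/-- waiting-time bound of the tiny-tasks single-queue fork-join model.
The inter-start gaps `Z_j(n)` (`j ∈ [1,k]`, `n ≥ 1`) are i.i.d. `Exp(lμ)`, the
inter-arrival times `(a_n)_{n≥2}` are i.i.d. nonnegative, all mutually independent.
With `W(1)=0`, `W(n) = [W(n−1) + Σ_{j=1}^{k} Z_j(n−1) − a_n]₊` and the waiting time
of task `i` of job `n` given by `W_i(n) = W(n) + Σ_{j=1}^{i−1} Z_j(n)`, for any
`θ ∈ (0, lμ)` with `(lμ/(lμ−θ))^k·E[e^{−θa₂}] ≤ 1` we have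
`P[W_i(n) ≥ τ] ≤ (lμ/(lμ−θ))^{i−1}·e^{−θτ}`. -/
theorem tiny_tasks_fork_join_waiting_time_bound
    {Ω : Type*} [MeasurableSpace Ω] (P : Measure Ω) [IsProbabilityMeasure P]
    (l k : ℕ) (hl : 1 ≤ l) (hk : 1 ≤ k) (μ : ℝ) (hμ : 0 < μ)
    (i : ℕ) (hi1 : 1 ≤ i) (hik : i ≤ k)
    (Z : Fin k → ℕ → Ω → ℝ) (a : ℕ → Ω → ℝ)
    (hZmeas : ∀ j n, Measurable (Z j n)) (hameas : ∀ n, Measurable (a n))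
    (hZlaw : ∀ j n, 1 ≤ n → Measure.map (Z j n) P = expMeasure (l * μ))
    (hanonneg : ∀ n ω, 2 ≤ n → 0 ≤ a n ω)
    (haid : ∀ n, 2 ≤ n → Measure.map (a n) P = Measure.map (a 2) P)
    (hindep : iIndepFun
      (Sum.elim (fun p : Fin k × ℕ => Z p.1 p.2) a) P)
    (θ : ℝ) (hθ : θ ∈ Set.Ioo 0 (l * μ))
    (hstab : (l * μ / (l * μ - θ)) ^ k * mgf (a 2) P (-θ) ≤ 1)
    (W : ℕ → Ω → ℝ)
    (hW1 : ∀ ω, W 1 ω = 0)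
    (hWn : ∀ n, 2 ≤ n → ∀ ω,
      W n ω = max 0 (W (n - 1) ω + (∑ j, Z j (n - 1) ω) - a n ω))
    (Wi : ℕ → Ω → ℝ)
    (hWi : ∀ n ω, Wi n ω = W n ω +
      ∑ j ∈ Finset.univ.filter (fun j : Fin k => (j : ℕ) < i - 1), Z j n ω) :
    ∀ n, 1 ≤ n → ∀ τ : ℝ, 0 ≤ τ →
      P {ω | τ ≤ Wi n ω} ≤
        ENNReal.ofReal ((l * μ / (l * μ - θ)) ^ (i - 1) * Real.exp (-θ * τ)) :=
  tiny_tasks_fork_join_waiting_time_bound_general P l k μ i hik Z a hZmeas hameas hZlaw hanonneg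
    haid hindep θ hθ hstab W hW1 hWn Wi hWi
end
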